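/- arXiv:math/0206294 — 2 statements merged into one kernel-verified Lean document; each statement's English description precedes it below -/
import Mathlib

section
/- For the (n+1)-dimensional irreducible sl_2-module U with highest weight vector v (e v = 0, h v = n v), define for a complex parameter t (with t not in {0,1,...,n-1} to avoid poles) the operator A(t) by A(t) f^k v = (-1)^n \frac{(-t-2)(-t-3)\cdots(-t-n+k-1)}{t(t-1)\cdots(t-k+1)} \frac{k!}{(n-k)!} f^{n-k} v for k = 0,1,...,n. Then A(-t-2) A(t) = Id whenever both sides are defined. -/
/-- The scalar of the `sl₂` dynamical Weyl group operator:
`(-1)^n * ((-t-2)(-t-3)⋯(-t-n+k-1)) / (t(t-1)⋯(t-k+1)) * k!/(n-k)!`. -/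
noncomputable def dynCoef (n k : ℕ) (t : ℂ) : ℂ :=
  (-1 : ℂ) ^ n *
    ((∏ j ∈ Finset.Icc 2 (n - k + 1), (-t - (j : ℂ))) /
      (∏ j ∈ Finset.range k, (t - (j : ℂ)))) *
    ((k.factorial : ℂ) / ((n - k).factorial : ℂ))


lemma dynAux (s : ℂ) (m : ℕ) :
    (∏ j ∈ Finset.Icc 2 (m + 1), (-s - (j : ℂ))) =
      ∏ i ∈ Finset.range m, ((-s - 2) - (i : ℂ)) := by
  have hIcc : Finset.Icc 2 (m + 1) = Finset.Ico 2 (m + 2) := by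
    ext x; simp [Nat.lt_succ_iff]
  rw [hIcc, Finset.prod_Ico_eq_prod_range]
  have hm : m + 2 - 2 = m := by omega
  rw [hm]
  refine Finset.prod_congr rfl fun i _ => ?_
  push_cast
  ring

lemma dynCoef_mul (n k : ℕ) (hk : k ≤ n) (t : ℂ)
    (ht : ∀ j < n, t ≠ (j : ℂ)) (ht' : ∀ j < n, -t - 2 ≠ (j : ℂ)) :
    dynCoef n k t * dynCoef n (n - k) (-t - 2) = 1 := by
  unfold dynCoef
  rw [Nat.sub_sub_self hk, dynAux t (n - k), dynAux (-t - 2) k]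
  have hQ : (∏ i ∈ Finset.range k, ((-(-t - 2) - 2) - (i : ℂ))) =
      ∏ i ∈ Finset.range k, (t - (i : ℂ)) := by
    refine Finset.prod_congr rfl fun i _ => ?_; ring
  rw [hQ]
  have hQ0 : (∏ i ∈ Finset.range k, (t - (i : ℂ))) ≠ 0 := by
    refine Finset.prod_ne_zero_iff.2 fun i hi => ?_
    have : t ≠ (i : ℂ) := ht i (lt_of_lt_of_le (Finset.mem_range.1 hi) hk)
    exact sub_ne_zero_of_ne this
  have hP0 : (∏ i ∈ Finset.range (n - k), ((-t - 2) - (i : ℂ))) ≠ 0 := by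
    refine Finset.prod_ne_zero_iff.2 fun i hi => ?_
    have : -t - 2 ≠ (i : ℂ) :=
      ht' i (lt_of_lt_of_le (Finset.mem_range.1 hi) (Nat.sub_le n k))
    exact sub_ne_zero_of_ne this
  have hkf : ((k.factorial : ℂ)) ≠ 0 := Nat.cast_ne_zero.2 k.factorial_ne_zero
  have hnkf : (((n - k).factorial : ℂ)) ≠ 0 := Nat.cast_ne_zero.2 (n - k).factorial_ne_zero
  have hsgn : ((-1 : ℂ) ^ n) * ((-1 : ℂ) ^ n) = 1 := by
    rw [← pow_add, ← two_mul, pow_mul]; norm_num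
  field_simp
  linear_combination hsgn
/-- For the `(n+1)`-dimensional irreducible `sl₂`-module with highest weight vector `v`,
the dynamical Weyl group operator `A(t)` defined by
`A(t) f^k v = dynCoef n k t • f^(n-k) v` satisfies `A(-t-2) A(t) = Id`
whenever both sides are defined. -/
theorem stmt2 (U : Type*) [AddCommGroup U] [Module ℂ U] [FiniteDimensional ℂ U]
    (e h f : Module.End ℂ U)
    (he : ⁅h, e⁆ = 2 • e) (hf : ⁅h, f⁆ = (-2 : ℤ) • f) (hef : ⁅e, f⁆ = h)
    (n : ℕ) (v : U) (hv : e v = 0) (hvh : h v = (n : ℂ) • v)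
    (hInd : LinearIndependent ℂ (fun k : Fin (n + 1) => (f ^ (k : ℕ)) v))
    (A : ℂ → Module.End ℂ U)
    (hA : ∀ t : ℂ, (∀ j < n, t ≠ (j : ℂ)) →
      ∀ k ≤ n, A t ((f ^ k) v) = dynCoef n k t • (f ^ (n - k)) v) :
    ∀ t : ℂ, (∀ j < n, t ≠ (j : ℂ)) → (∀ j < n, -t - 2 ≠ (j : ℂ)) →
      ∀ k ≤ n, A (-t - 2) (A t ((f ^ k) v)) = (f ^ k) v := by
  intro t ht ht' k hk
  rw [hA t ht k hk, map_smul, hA (-t - 2) ht' (n - k) (Nat.sub_le n k),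
    Nat.sub_sub_self hk, smul_smul, dynCoef_mul n k hk t ht ht', one_smul]
end

section
/- For nonnegative integers a, b, c, the determinant of the (c+1)\times(c+1) matrix M with entries M_{ij} = \binom{a+b}{a - i + j} (indices i,j = 0,...,c) equals \prod_{i=1}^{c+1} \prod_{j=1}^{a} \prod_{s=1}^{b} \frac{i+j+s-1}{i+j+s-2}. -/
open Finset Polynomial

lemma fact_desc (m k : ℕ) (h : k ≤ m) :
    ((m.factorial : ℚ)) = ((m - k).factorial : ℚ) * ∏ t ∈ range k, ((m : ℚ) - t) := by
  induction k with
  | zero => simp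
  | succ k ih =>
    have hk : k ≤ m := Nat.le_of_succ_le h
    have h1 : m - k = (m - (k + 1)) + 1 := by omega
    rw [prod_range_succ, ih hk, h1, Nat.factorial_succ]
    have h2 : ((m - (k + 1) + 1 : ℕ) : ℚ) = (m : ℚ) - k := by
      have h3 : (m - (k+1) + 1 : ℕ) = m - k := by omega
      rw [h3, Nat.cast_sub hk]
    push_cast
    push_cast at h2
    rw [h2]; ring

lemma fact_asc (m k : ℕ) :
    (((m + k).factorial : ℚ)) = (m.factorial : ℚ) * ∏ j ∈ range k, ((m : ℚ) + j + 1) := by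
  induction k with
  | zero => simp
  | succ k ih =>
    have h : m + (k + 1) = (m + k) + 1 := by omega
    rw [h, Nat.factorial_succ, prod_range_succ, Nat.cast_mul, ih]
    push_cast; ring

lemma choose_cast_eq' (n k : ℕ) (h : k ≤ n) :
    ((n.choose k : ℚ)) = ((n.factorial : ℚ)) / ((k.factorial : ℚ) * ((n - k).factorial : ℚ)) := by
  have h2 : ((n.choose k : ℕ) : ℚ) * (k.factorial : ℚ) * ((n-k).factorial : ℚ) = (n.factorial : ℚ) := by
    exact_mod_cast congrArg (fun x : ℕ => (x : ℚ)) (Nat.choose_mul_factorial_mul_factorial h)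
  have hk : (k.factorial : ℚ) ≠ 0 := Nat.cast_ne_zero.mpr (Nat.factorial_ne_zero _)
  have hnk : ((n-k).factorial : ℚ) ≠ 0 := Nat.cast_ne_zero.mpr (Nat.factorial_ne_zero _)
  field_simp
  linarith [h2]

lemma choose_cast_eq (n k : ℕ) :
    ((n.choose k : ℚ)) * (k.factorial : ℚ) = ∏ t ∈ range k, ((n : ℚ) - t) := by
  by_cases h : k ≤ n
  · rw [choose_cast_eq' n k h]
    have hnk : ((n-k).factorial : ℚ) ≠ 0 := Nat.cast_ne_zero.mpr (Nat.factorial_ne_zero _)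
    have hk : (k.factorial : ℚ) ≠ 0 := Nat.cast_ne_zero.mpr (Nat.factorial_ne_zero _)
    rw [fact_desc n k h]
    field_simp
  · have h0 : n.choose k = 0 := Nat.choose_eq_zero_of_lt (lt_of_not_ge h)
    rw [h0]
    symm
    rw [Nat.cast_zero, zero_mul]
    exact prod_eq_zero (mem_range.mpr (lt_of_not_ge h)) (by ring)
open Finset Polynomial Matrix

noncomputable def Pp (a b c j : ℕ) : Polynomial ℚ :=
  (∏ t ∈ range (c - j), (Polynomial.C ((a : ℚ) + c - t) - Polynomial.X)) *
  (∏ t ∈ range j, (Polynomial.X + Polynomial.C ((b : ℚ) - t)))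

lemma Pp_natDegree_lt (a b c j : ℕ) (hj : j ≤ c) : (Pp a b c j).natDegree < c + 1 := by
  have h1 : (∏ t ∈ range (c - j), (Polynomial.C ((a : ℚ) + c - t) - Polynomial.X)).natDegree ≤ c - j := by
    refine le_trans (Polynomial.natDegree_prod_le _ _) ?_
    refine le_trans (Finset.sum_le_card_nsmul _ _ 1 ?_) (by simp)
    intro t _
    have h : (Polynomial.C ((a : ℚ) + c - t) - Polynomial.X) = -(Polynomial.X - Polynomial.C ((a : ℚ) + c - t)) := by ring
    rw [h, Polynomial.natDegree_neg, Polynomial.natDegree_X_sub_C]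
  have h2 : (∏ t ∈ range j, (Polynomial.X + Polynomial.C ((b : ℚ) - t))).natDegree ≤ j := by
    refine le_trans (Polynomial.natDegree_prod_le _ _) ?_
    refine le_trans (Finset.sum_le_card_nsmul _ _ 1 ?_) (by simp)
    intro t _
    exact le_of_eq (Polynomial.natDegree_X_add_C _)
  have := Polynomial.natDegree_mul_le (p := (∏ t ∈ range (c - j), (Polynomial.C ((a : ℚ) + c - t) - Polynomial.X))) (q := (∏ t ∈ range j, (Polynomial.X + Polynomial.C ((b : ℚ) - t))))
  unfold Pp
  omega

lemma eval_Pp (a b c j : ℕ) (x : ℚ) :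
    (Pp a b c j).eval x =
      (∏ t ∈ range (c - j), ((a : ℚ) + c - t - x)) * (∏ t ∈ range j, (x + (b : ℚ) - t)) := by
  simp [Pp, eval_prod]
  constructor <;> exact prod_congr rfl (fun t _ => by ring)

lemma eval_matrix_eq (a b c : ℕ) (x : Fin (c+1) → ℚ) :
    Matrix.det (Matrix.of fun i j : Fin (c+1) => (Pp a b c j).eval (x i)) =
      (∏ i : Fin (c+1), ∏ j ∈ Finset.Ioi i, (x j - x i)) *
        Matrix.det (Matrix.of fun k j : Fin (c+1) => (Pp a b c (j : ℕ)).coeff k) := by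
  have hm : (Matrix.of fun i j : Fin (c+1) => (Pp a b c j).eval (x i)) =
      (Matrix.vandermonde x) * (Matrix.of fun k j : Fin (c+1) => (Pp a b c (j : ℕ)).coeff k) := by
    ext i j
    simp only [Matrix.mul_apply, Matrix.vandermonde, Matrix.of_apply]
    rw [Polynomial.eval_eq_sum_range' (Pp_natDegree_lt a b c j (by omega : (j:ℕ) ≤ c)) (x i)]
    rw [Fin.sum_univ_eq_sum_range (fun k => x i ^ k * (Pp a b c (j : ℕ)).coeff k)]
    exact Finset.sum_congr rfl (fun k _ => mul_comm _ _)
  rw [hm, Matrix.det_mul, Matrix.det_vandermonde]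

lemma fact_ne (n : ℕ) : ((n.factorial : ℚ)) ≠ 0 := Nat.cast_ne_zero.mpr (Nat.factorial_ne_zero _)

noncomputable def Mmat (a b c : ℕ) : Matrix (Fin (c+1)) (Fin (c+1)) ℚ :=
  fun i j : Fin (c + 1) =>
    if (i : ℕ) ≤ a + (j : ℕ) then ((a + b).choose (a + (j : ℕ) - (i : ℕ)) : ℚ) else 0

noncomputable def RHSfact (a b c : ℕ) : ℚ :=
  ∏ i ∈ range (c+1),
    (((a+b+i).factorial : ℚ) * (i.factorial : ℚ)) / (((a+i).factorial : ℚ) * ((b+i).factorial : ℚ))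

lemma det_shift_tri (a b c : ℕ) :
    Matrix.det (Matrix.of fun i j : Fin (c+1) => (Pp a b c j).eval ((a:ℚ) + i)) =
      ∏ i : Fin (c+1), (((c - (i:ℕ)).factorial : ℚ) * (((a+b+(i:ℕ)).factorial : ℚ) / ((a+b).factorial : ℚ))) := by
  rw [Matrix.det_of_upperTriangular]
  · refine Finset.prod_congr rfl (fun i _ => ?_)
    rw [Matrix.of_apply, eval_Pp]
    have hi : (i : ℕ) ≤ c := by omega
    have h1 : (∏ t ∈ range (c - (i:ℕ)), ((a : ℚ) + c - t - ((a:ℚ) + i))) = ((c - (i:ℕ)).factorial : ℚ) := by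
      rw [fact_desc (c - (i:ℕ)) (c - (i:ℕ)) le_rfl]
      simp only [Nat.sub_self, Nat.factorial_zero, Nat.cast_one, one_mul]
      refine Finset.prod_congr rfl (fun t _ => ?_)
      rw [Nat.cast_sub hi]; ring
    have h2 : (∏ t ∈ range (i:ℕ), (((a:ℚ) + i) + (b : ℚ) - t)) = ((a+b+(i:ℕ)).factorial : ℚ) / ((a+b).factorial : ℚ) := by
      have hd := fact_desc (a+b+(i:ℕ)) (i:ℕ) (by omega)
      have h3 : a + b + (i:ℕ) - (i:ℕ) = a + b := by omega
      rw [h3] at hd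
      rw [eq_div_iff (fact_ne (a+b)), hd, mul_comm]
      congr 1
      refine Finset.prod_congr rfl (fun t _ => ?_)
      push_cast; ring
    rw [h1, h2]
  · intro i j hji
    rw [Matrix.of_apply, eval_Pp]
    have hmem : c - (i:ℕ) ∈ range (c - (j:ℕ)) := by
      rw [mem_range]
      have : (j:ℕ) < (i:ℕ) := hji
      omega
    rw [Finset.prod_eq_zero hmem, zero_mul]
    have hi : (i : ℕ) ≤ c := by omega
    rw [Nat.cast_sub hi]; ring

lemma entry_eq (a b c : ℕ) (ha : c ≤ a) (hb : c ≤ b) (i j : Fin (c+1)) :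
    Mmat a b c i j =
      (((a+b).factorial : ℚ) / (((a + c - (i:ℕ)).factorial : ℚ) * ((b + (i:ℕ)).factorial : ℚ))) *
        (Pp a b c (j:ℕ)).eval (((i:ℕ) : ℚ)) := by
  have hi : (i:ℕ) ≤ c := by omega
  have hj : (j:ℕ) ≤ c := by omega
  have hcond : (i:ℕ) ≤ a + (j:ℕ) := by omega
  rw [Mmat]
  simp only [if_pos hcond]
  have hk : a + (j:ℕ) - (i:ℕ) ≤ a + b := by omega
  rw [choose_cast_eq' _ _ hk]
  have hab : a + b - (a + (j:ℕ) - (i:ℕ)) = b + (i:ℕ) - (j:ℕ) := by omega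
  rw [hab, eval_Pp]
  have e1 : (∏ t ∈ range (c - (j:ℕ)), ((a : ℚ) + c - t - ((i:ℕ):ℚ))) =
      ∏ t ∈ range (c - (j:ℕ)), (((a + c - (i:ℕ) : ℕ):ℚ) - t) := by
    refine Finset.prod_congr rfl (fun t _ => ?_)
    rw [Nat.cast_sub (by omega : (i:ℕ) ≤ a + c)]
    push_cast; ring
  have e2 : (∏ t ∈ range (j:ℕ), (((i:ℕ):ℚ) + (b : ℚ) - t)) =
      ∏ t ∈ range (j:ℕ), (((b + (i:ℕ) : ℕ):ℚ) - t) := by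
    refine Finset.prod_congr rfl (fun t _ => ?_)
    push_cast; ring
  rw [e1, e2]
  have f1 := fact_desc (a + c - (i:ℕ)) (c - (j:ℕ)) (by omega)
  rw [(by omega : a + c - (i:ℕ) - (c - (j:ℕ)) = a + (j:ℕ) - (i:ℕ))] at f1
  have f2 := fact_desc (b + (i:ℕ)) (j:ℕ) (by omega)
  rw [(by omega : b + (i:ℕ) - (j:ℕ) = b + (i:ℕ) - (j:ℕ))] at f2
  rw [f1, f2]
  have n1 := fact_ne (a + (j:ℕ) - (i:ℕ))
  have n2 := fact_ne (b + (i:ℕ) - (j:ℕ))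
  have n3 := fact_ne (a+b)
  have hp1 : (∏ t ∈ range (c - (j:ℕ)), (((a + c - (i:ℕ) : ℕ):ℚ) - t)) ≠ 0 := by
    intro h0
    have := f1
    rw [h0, mul_zero] at this
    exact fact_ne _ this
  have hp2 : (∏ t ∈ range (j:ℕ), (((b + (i:ℕ) : ℕ):ℚ) - t)) ≠ 0 := by
    intro h0
    have := f2
    rw [h0, mul_zero] at this
    exact fact_ne _ this
  rw [div_mul_eq_mul_div, div_eq_div_iff (mul_ne_zero n1 n2) (mul_ne_zero (mul_ne_zero n1 hp1) (mul_ne_zero n2 hp2))]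
  ring

lemma key1 (a b c : ℕ) (ha : c ≤ a) (hb : c ≤ b) : (Mmat a b c).det = RHSfact a b c := by
  have hM : Mmat a b c = Matrix.of (fun i j : Fin (c+1) =>
      (((a+b).factorial : ℚ) / (((a + c - (i:ℕ)).factorial : ℚ) * ((b + (i:ℕ)).factorial : ℚ))) *
        (Matrix.of fun i j : Fin (c+1) => (Pp a b c (j:ℕ)).eval (((i:ℕ) : ℚ))) i j) := by
    ext i j
    exact entry_eq a b c ha hb i j
  rw [hM, Matrix.det_mul_column, eval_matrix_eq a b c (fun i : Fin (c+1) => ((i:ℕ):ℚ))]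
  have h2 := eval_matrix_eq a b c (fun i : Fin (c+1) => (a:ℚ) + ((i:ℕ):ℚ))
  rw [det_shift_tri] at h2
  have hVV : (∏ i : Fin (c+1), ∏ j ∈ Finset.Ioi i, (((j:ℕ):ℚ) - ((i:ℕ):ℚ))) =
      (∏ i : Fin (c+1), ∏ j ∈ Finset.Ioi i, (((a:ℚ) + ((j:ℕ):ℚ)) - ((a:ℚ) + ((i:ℕ):ℚ)))) := by
    exact Finset.prod_congr rfl (fun i _ => Finset.prod_congr rfl (fun j _ => by ring))
  rw [hVV, ← h2, ← Finset.prod_mul_distrib]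
  rw [Fin.prod_univ_eq_prod_range (fun i : ℕ =>
    (((a+b).factorial : ℚ) / (((a + c - i).factorial : ℚ) * ((b + i).factorial : ℚ))) *
      (((c - i).factorial : ℚ) * (((a+b+i).factorial : ℚ) / ((a+b).factorial : ℚ)))) (c+1)]
  have step1 : ∀ i ∈ range (c+1),
      (((a+b).factorial : ℚ) / (((a + c - i).factorial : ℚ) * ((b + i).factorial : ℚ))) *
        (((c - i).factorial : ℚ) * (((a+b+i).factorial : ℚ) / ((a+b).factorial : ℚ))) =
      (((c + 1 - 1 - i).factorial : ℚ) / ((a + (c + 1 - 1 - i)).factorial : ℚ)) *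
        (((a+b+i).factorial : ℚ) / ((b+i).factorial : ℚ)) := by
    intro i hi
    rw [mem_range] at hi
    rw [(by omega : c + 1 - 1 - i = c - i), (by omega : a + (c - i) = a + c - i)]
    have n1 := fact_ne (a + c - i)
    have n2 := fact_ne (b + i)
    have n3 := fact_ne (a + b)
    field_simp
  rw [Finset.prod_congr rfl step1, Finset.prod_mul_distrib,
    Finset.prod_range_reflect (fun i : ℕ => ((i.factorial : ℚ) / ((a+i).factorial : ℚ))) (c+1),
    ← Finset.prod_mul_distrib, RHSfact]
  refine Finset.prod_congr rfl (fun i _ => ?_)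
  rw [div_mul_div_comm]
  ring_nf

lemma poly_ext {p q : Polynomial ℚ} {N : ℕ} (h : ∀ b : ℕ, N ≤ b → p.eval (b:ℚ) = q.eval (b:ℚ)) :
    ∀ b : ℕ, p.eval (b:ℚ) = q.eval (b:ℚ) := by
  have hpq : p = q := by
    apply Polynomial.eq_of_infinite_eval_eq
    apply Set.Infinite.mono (s := (fun n : ℕ => (n : ℚ)) '' (Set.Ici N))
    · rintro x ⟨n, hn, rfl⟩
      exact h n hn
    · exact Set.Infinite.image (Set.injOn_of_injective Nat.cast_injective)
        (Set.Ici_infinite N)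
  intro b; rw [hpq]

noncomputable def PM (a c : ℕ) : Matrix (Fin (c+1)) (Fin (c+1)) (Polynomial ℚ) :=
  fun i j => if (i:ℕ) ≤ a + (j:ℕ) then
      Polynomial.C (((a + (j:ℕ) - (i:ℕ)).factorial : ℚ))⁻¹ *
        ∏ t ∈ range (a + (j:ℕ) - (i:ℕ)), (Polynomial.X + Polynomial.C ((a:ℚ) - t))
    else 0

lemma PM_eval (a c : ℕ) (b : ℕ) :
    ((PM a c).det).eval (b : ℚ) = (Mmat a b c).det := by
  rw [← Polynomial.coe_evalRingHom, RingHom.map_det]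
  congr 1
  ext i j
  rw [RingHom.mapMatrix_apply]
  simp only [Matrix.map_apply, PM, Mmat, Polynomial.coe_evalRingHom]
  by_cases h : (i:ℕ) ≤ a + (j:ℕ)
  · rw [if_pos h, if_pos h]
    rw [Polynomial.eval_mul, Polynomial.eval_C, Polynomial.eval_prod]
    have hc := choose_cast_eq (a+b) (a + (j:ℕ) - (i:ℕ))
    have e1 : (∏ t ∈ range (a + (j:ℕ) - (i:ℕ)), Polynomial.eval (b:ℚ) (Polynomial.X + Polynomial.C ((a:ℚ) - t))) =
        ∏ t ∈ range (a + (j:ℕ) - (i:ℕ)), (((a+b:ℕ):ℚ) - t) := by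
      refine Finset.prod_congr rfl (fun t _ => ?_)
      simp only [Polynomial.eval_add, Polynomial.eval_X, Polynomial.eval_C]
      push_cast; ring
    rw [e1, ← hc]
    field_simp
  · rw [if_neg h, if_neg h, Polynomial.eval_zero]

noncomputable def PR (a c : ℕ) : Polynomial ℚ :=
  Polynomial.C (∏ i ∈ range (c+1), ((i.factorial : ℚ) / ((a+i).factorial : ℚ))) *
    ∏ i ∈ range (c+1), ∏ j ∈ range a, (Polynomial.X + Polynomial.C ((i:ℚ) + j + 1))

lemma PR_eval (a c : ℕ) (b : ℕ) : (PR a c).eval (b : ℚ) = RHSfact a b c := by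
  rw [PR, Polynomial.eval_mul, Polynomial.eval_C, Polynomial.eval_prod]
  have e1 : ∀ i ∈ range (c+1),
      (Polynomial.eval (b:ℚ) (∏ j ∈ range a, (Polynomial.X + Polynomial.C ((i:ℚ) + j + 1)))) =
        (((a+b+i).factorial : ℚ) / ((b+i).factorial : ℚ)) := by
    intro i _
    rw [Polynomial.eval_prod]
    have e2 : (∏ j ∈ range a, Polynomial.eval (b:ℚ) (Polynomial.X + Polynomial.C ((i:ℚ) + j + 1))) =
        ∏ j ∈ range a, (((b+i:ℕ):ℚ) + j + 1) := by
      refine Finset.prod_congr rfl (fun t _ => ?_)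
      simp only [Polynomial.eval_add, Polynomial.eval_X, Polynomial.eval_C]
      push_cast; ring
    have hf := fact_asc (b+i) a
    rw [(by omega : b + i + a = a + b + i)] at hf
    rw [e2, eq_div_iff (fact_ne (b+i)), hf]
    ring
  rw [Finset.prod_congr rfl e1, ← Finset.prod_mul_distrib, RHSfact]
  refine Finset.prod_congr rfl (fun i _ => ?_)
  rw [div_mul_div_comm]
  ring_nf

lemma Mdet_symm (a b c : ℕ) : (Mmat a b c).det = (Mmat b a c).det := by
  rw [← Matrix.det_transpose (Mmat a b c)]
  congr 1
  ext i j
  rw [Matrix.transpose_apply]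
  simp only [Mmat]
  by_cases h1 : (j:ℕ) ≤ a + (i:ℕ) <;> by_cases h2 : (i:ℕ) ≤ b + (j:ℕ)
  · rw [if_pos h1, if_pos h2]
    have hk : a + (i:ℕ) - (j:ℕ) ≤ a + b := by omega
    have he : b + (j:ℕ) - (i:ℕ) = (a + b) - (a + (i:ℕ) - (j:ℕ)) := by omega
    rw [(by omega : b + a = a + b), he, Nat.choose_symm hk]
  · rw [if_pos h1, if_neg h2]
    have : a + b < a + (i:ℕ) - (j:ℕ) := by omega
    rw [Nat.choose_eq_zero_of_lt this, Nat.cast_zero]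
  · rw [if_neg h1, if_pos h2]
    have : b + a < b + (j:ℕ) - (i:ℕ) := by omega
    rw [Nat.choose_eq_zero_of_lt this, Nat.cast_zero]
  · rw [if_neg h1, if_neg h2]

lemma RHSfact_symm (a b c : ℕ) : RHSfact a b c = RHSfact b a c := by
  unfold RHSfact
  refine Finset.prod_congr rfl (fun i _ => ?_)
  rw [(by omega : b + a + i = a + b + i)]
  ring

lemma key2 (a c : ℕ) (ha : c ≤ a) (b : ℕ) : (Mmat a b c).det = RHSfact a b c := by
  have h := poly_ext (p := (PM a c).det) (q := PR a c) (N := c)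
    (fun b' hb => by rw [PM_eval, PR_eval]; exact key1 a b' c ha hb) b
  calc (Mmat a b c).det = ((PM a c).det).eval (b:ℚ) := (PM_eval a c b).symm
    _ = (PR a c).eval (b:ℚ) := h
    _ = RHSfact a b c := PR_eval a c b

lemma key3 (a b c : ℕ) : (Mmat a b c).det = RHSfact a b c := by
  have h := poly_ext (p := (PM a c).det) (q := PR a c) (N := c)
    (fun b' hb => by
      rw [PM_eval, PR_eval, Mdet_symm, key2 b' c hb a, RHSfact_symm]) b
  calc (Mmat a b c).det = ((PM a c).det).eval (b:ℚ) := (PM_eval a c b).symm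
    _ = (PR a c).eval (b:ℚ) := h
    _ = RHSfact a b c := PR_eval a c b

lemma tele (x : ℚ) (hx : 0 ≤ x) (b : ℕ) :
    ∏ s ∈ range b, ((x + s + 2) / (x + s + 1)) = (x + b + 1) / (x + 1) := by
  induction b with
  | zero => simp; rw [div_self (by linarith : x + 1 ≠ 0)]
  | succ b ih =>
    rw [prod_range_succ, ih]
    have h1 : x + 1 ≠ 0 := by linarith
    have h2 : x + b + 1 ≠ 0 := by positivity
    field_simp
    push_cast
    ring


/-- The classical binomial determinant evaluation: for nonnegative integers `a, b, c`,
the determinant of the `(c+1)×(c+1)` matrix with entries `M i j = (a+b).choose (a-i+j)`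
(with the convention that the binomial coefficient vanishes for negative lower index)
equals `∏_{i=1}^{c+1} ∏_{j=1}^{a} ∏_{s=1}^{b} (i+j+s-1)/(i+j+s-2)`. -/
theorem stmt7 (a b c : ℕ) :
    Matrix.det (fun i j : Fin (c + 1) =>
        if (i : ℕ) ≤ a + (j : ℕ) then ((a + b).choose (a + (j : ℕ) - (i : ℕ)) : ℚ) else 0) =
      ∏ i ∈ Finset.range (c + 1), ∏ j ∈ Finset.range a, ∏ s ∈ Finset.range b,
        ((i + j + s + 2 : ℚ) / (i + j + s + 1 : ℚ)) := by
  have hL : Matrix.det (fun i j : Fin (c + 1) =>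
      if (i : ℕ) ≤ a + (j : ℕ) then ((a + b).choose (a + (j : ℕ) - (i : ℕ)) : ℚ) else 0) =
      (Mmat a b c).det := rfl
  rw [hL, key3 a b c, RHSfact]
  refine Finset.prod_congr rfl (fun i hi => ?_)
  have e1 : ∀ j ∈ range a, (∏ s ∈ range b, (((i:ℚ) + j + s + 2) / ((i:ℚ) + j + s + 1))) =
      (((i:ℚ) + j + b + 1) / ((i:ℚ) + j + 1)) := by
    intro j _
    have hx : (0:ℚ) ≤ (i:ℚ) + j := by positivity
    have := tele ((i:ℚ) + (j:ℚ)) hx b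
    calc (∏ s ∈ range b, (((i:ℚ) + j + s + 2) / ((i:ℚ) + j + s + 1)))
        = ∏ s ∈ range b, ((((i:ℚ) + j) + s + 2) / (((i:ℚ) + j) + s + 1)) := by
          refine Finset.prod_congr rfl (fun s _ => by ring_nf)
      _ = (((i:ℚ) + j) + b + 1) / (((i:ℚ) + j) + 1) := this
      _ = (((i:ℚ) + j + b + 1) / ((i:ℚ) + j + 1)) := by ring_nf
  rw [Finset.prod_congr rfl e1, Finset.prod_div_distrib]
  have e2 : (∏ j ∈ range a, ((i:ℚ) + j + b + 1)) = ((a+b+i).factorial : ℚ) / ((b+i).factorial : ℚ) := by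
    have hf := fact_asc (b+i) a
    rw [(by omega : b + i + a = a + b + i)] at hf
    rw [eq_div_iff (fact_ne (b+i))]
    rw [show (∏ j ∈ range a, ((i:ℚ) + j + b + 1)) = ∏ j ∈ range a, (((b+i:ℕ):ℚ) + j + 1) from
      Finset.prod_congr rfl (fun j _ => by push_cast; ring)]
    rw [hf]; ring
  have e3 : (∏ j ∈ range a, ((i:ℚ) + j + 1)) = ((a+i).factorial : ℚ) / ((i).factorial : ℚ) := by
    have hf := fact_asc i a
    rw [(by omega : i + a = a + i)] at hf
    rw [eq_div_iff (fact_ne i), hf]; ring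
  rw [e2, e3]
  have n1 := fact_ne (b+i)
  have n2 := fact_ne (a+i)
  have n3 := fact_ne i
  field_simp
end
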